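/- arXiv:2511.04345 — 2 statements merged into one kernel-verified Lean document; each statement's English description precedes it below -/
import Mathlib

section
/- Let G be an (s,t)-layered graph with layer function λ. For every edge (u,v) of G: if (u,v) is a back-edge (i.e., d(s,u) + w(u,v) > d(s,v)) then λ(v) < λ(u); and if (u,v) is a forward-edge (i.e., d(s,u) + w(u,v) = d(s,v)) then λ(v) = λ(u) + 1. -/
variable {V : Type*}

/-- Total weight of a walk given as a list of vertices. -/
def walkWt (w : V → V → ℝ) : List V → ℝ
  | [] => 0
  | [_] => 0
  | a :: b :: rest => w a b + walkWt w (b :: rest)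

/-- The list of (directed) edges traversed by a walk. -/
def listEdges : List V → List (V × V)
  | [] => []
  | [_] => []
  | a :: b :: rest => (a, b) :: listEdges (b :: rest)

/-- `l` is a walk from `u` to `v` in the digraph with edge relation `E`. -/
def IsWalkFrom (E : V → V → Prop) (u v : V) (l : List V) : Prop :=
  l.Chain' E ∧ l.head? = some u ∧ l.getLast? = some v

/-- `l` is a (simple) path from `u` to `v`. -/
def IsPathFrom (E : V → V → Prop) (u v : V) (l : List V) : Prop :=
  IsWalkFrom E u v l ∧ l.Nodup

/-- `d` is the shortest-path distance function of `(E, w)`: it lower-bounds the weight of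
every path, and is achieved by some path whenever some path exists. -/
def IsDistFn (E : V → V → Prop) (w : V → V → ℝ) (d : V → V → ℝ) : Prop :=
  (∀ u v l, IsPathFrom E u v l → d u v ≤ walkWt w l) ∧
  (∀ u v, (∃ l, IsPathFrom E u v l) → ∃ l, IsPathFrom E u v l ∧ walkWt w l = d u v)

/-- All edge weights are (strictly) positive. -/
def PosWeights (E : V → V → Prop) (w : V → V → ℝ) : Prop :=
  ∀ u v, E u v → 0 < w u v

/-- A back-edge relative to source `s`: `d(s,u) + w(u,v) > d(s,v)`. -/
def IsBackEdge (E : V → V → Prop) (w : V → V → ℝ) (d : V → V → ℝ) (s : V) (p : V × V) : Prop :=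
  E p.1 p.2 ∧ d s p.2 < d s p.1 + w p.1 p.2

/-- A forward-edge relative to source `s`: `d(s,u) + w(u,v) = d(s,v)`. -/
def IsForwardEdge (E : V → V → Prop) (w : V → V → ℝ) (d : V → V → ℝ) (s : V) (p : V × V) : Prop :=
  E p.1 p.2 ∧ d s p.1 + w p.1 p.2 = d s p.2

/-- A forward path: all its edges are forward-edges. -/
def IsForwardPath (E : V → V → Prop) (w : V → V → ℝ) (d : V → V → ℝ) (s : V) (l : List V) : Prop :=
  ∀ p ∈ listEdges l, IsForwardEdge E w d s p

/-- `(s,t)`-straight graph: every vertex lies on a shortest `s → t` path. -/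
def IsStraight (E : V → V → Prop) (w : V → V → ℝ) (d : V → V → ℝ) (s t : V) : Prop :=
  (∀ u, d s u + d u t = d s t) ∧
  (∀ u, ∃ l, IsPathFrom E s t l ∧ u ∈ l ∧ walkWt w l = d s t)

/-- `(s,t)`-layered graph. -/
def IsLayered (E : V → V → Prop) (w : V → V → ℝ) (d : V → V → ℝ) (s t : V) : Prop :=
  IsStraight E w d s t ∧
  (∀ u v, E u v → d s u ≠ d s v) ∧
  (∀ u v, E u v → d s u < d s v → ∀ x, d s x ≤ d s u ∨ d s u + w u v ≤ d s x)

/-- The layer of `u`: the rank of `d(s,u)` among the distinct values of `d(s,·)`. -/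
noncomputable def layer [Fintype V] (d : V → V → ℝ) (s : V) (u : V) : ℕ :=
  ((Finset.univ.image (fun x : V => d s x)).filter (fun p => p ≤ d s u)).card

/-- An `s → t` not-shortest path. -/
def IsNotShortest (E : V → V → Prop) (w : V → V → ℝ) (d : V → V → ℝ) (s t : V)
    (l : List V) : Prop :=
  IsPathFrom E s t l ∧ d s t < walkWt w l

/-- An `s → t` next-to-shortest path: a not-shortest path of minimum weight. -/
def IsNextToShortest (E : V → V → Prop) (w : V → V → ℝ) (d : V → V → ℝ) (s t : V)
    (l : List V) : Prop :=
  IsNotShortest E w d s t l ∧ ∀ l', IsNotShortest E w d s t l' → walkWt w l ≤ walkWt w l'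

/-- Back-edge decomposition of a path `l = l1 ∘ l0 ∘ l2`, where `l0` runs from `A` to `B`,
starting with the first back-edge of `l` and ending with the last one. -/
def IsBEDecomp (E : V → V → Prop) (w : V → V → ℝ) (d : V → V → ℝ) (s t : V)
    (l l1 l0 l2 : List V) (A B : V) : Prop :=
  IsPathFrom E s A l1 ∧ IsPathFrom E A B l0 ∧ IsPathFrom E B t l2 ∧
  l = l1 ++ l0.tail ++ l2.tail ∧
  (∀ p ∈ listEdges l1, ¬ IsBackEdge E w d s p) ∧
  (∀ p ∈ listEdges l2, ¬ IsBackEdge E w d s p) ∧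
  (∃ p, (listEdges l0).head? = some p ∧ IsBackEdge E w d s p) ∧
  (∃ p, (listEdges l0).getLast? = some p ∧ IsBackEdge E w d s p)

/-- in an `(s,t)`-layered graph, every back-edge strictly decreases the layer,
and every forward-edge increases the layer by exactly one. -/
theorem stmt3 [Fintype V] (E : V → V → Prop) (w d : V → V → ℝ) (s t : V)
    (hpos : PosWeights E w) (hd : IsDistFn E w d)
    (hL : IsLayered E w d s t) :
    ∀ u v, E u v →
      (IsBackEdge E w d s (u, v) → layer d s v < layer d s u) ∧
      (IsForwardEdge E w d s (u, v) → layer d s v = layer d s u + 1) := by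
  obtain ⟨hstraight, hne, hsep⟩ := hL
  intro u v huv
  constructor
  · rintro ⟨-, hback⟩
    have hlt : d s v < d s u := by
      rcases lt_or_gt_of_ne (hne u v huv) with h | h
      · rcases hsep u v huv h v with h1 | h1 <;> simp at hback <;> linarith
      · exact h
    unfold layer
    apply Finset.card_lt_card
    rw [Finset.ssubset_iff_of_subset]
    · refine ⟨d s u, Finset.mem_filter.mpr ⟨Finset.mem_image_of_mem _ (Finset.mem_univ u), le_refl _⟩, ?_⟩
      simp only [Finset.mem_filter, not_and]
      intro _
      simpa using hlt
    · intro p hp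
      simp only [Finset.mem_filter] at hp ⊢
      exact ⟨hp.1, hp.2.trans hlt.le⟩
  · rintro ⟨-, hfwd⟩
    simp only at hfwd
    have hw := hpos u v huv
    have hlt : d s u < d s v := by linarith
    unfold layer
    have hsep' := hsep u v huv hlt
    rw [hfwd] at hsep'
    have heq : (Finset.univ.image (fun x : V => d s x)).filter (fun p => p ≤ d s v)
        = insert (d s v) ((Finset.univ.image (fun x : V => d s x)).filter (fun p => p ≤ d s u)) := by
      ext p
      simp only [Finset.mem_insert, Finset.mem_filter, Finset.mem_image]
      constructor
      · rintro ⟨⟨x, -, rfl⟩, hp⟩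
        rcases hsep' x with h1 | h1
        · exact Or.inr ⟨⟨x, Finset.mem_univ x, rfl⟩, h1⟩
        · exact Or.inl (le_antisymm hp h1)
      · rintro (rfl | ⟨hx, hp⟩)
        · exact ⟨⟨v, Finset.mem_univ v, rfl⟩, le_refl _⟩
        · exact ⟨hx, hp.trans hlt.le⟩
    rw [heq, Finset.card_insert_of_notMem]
    simp only [Finset.mem_filter, not_and]
    intro _
    simp only [not_le]
    exact hlt
end

section
/- Let G be an (s,t)-layered graph and let P* be an s-to-t next-to-shortest path with back-edge decomposition (A, B; P*_1, P*_0, P*_2), where P*_0 is the subpath of P* starting with the first back-edge and ending with the last back-edge, A is the start of P*_0 and B is its end. Then d(s,B) < d(s,A), and every internal vertex u of P*_0 satisfies d(s,B) < d(s,u) < d(s,A). -/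
/-!
Every edge of a layered graph either raises `d(s,·)` by exactly its weight (forward edge) or
lowers it (back edge), so a walk from `a` to `b` weighs `d(s,b) - d(s,a)` plus the slacks of its
back edges. Cut `P*` at an internal vertex `z` of `P*₀`: the part before `z` contains the first
back edge and the part after it the last one, so each is strictly heavier than a forward path
with the same ends, which straightness provides. Swapping either part for such a forward path
gives a lighter path that is still not shortest, contradicting minimality, as long as the new
path stays simple. Forward paths, and `P*₁`, `P*₂`, are strictly increasing in `d(s,·)`; hence
the swap is simple when `z` minimises `d(s,·)` over the internal vertices and
`d(s,z) ≤ d(s,B)`, or maximises it and `d(s,A) ≤ d(s,z)`. Finally the first back edge `(A, x)`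
gives `d(s,x) < d(s,A)`.
-/

variable {V : Type*}

lemma walkWt_eq_sum_map (w : V → V → ℝ) (l : List V) :
    walkWt w l = ((listEdges l).map fun p => w p.1 p.2).sum := by
  fun_induction walkWt w l <;> simp_all [listEdges]

lemma walkWt_eq_sub_add_sum_map (w : V → V → ℝ) (f : V → ℝ) {l : List V} {a b : V}
    (ha : l.head? = some a) (hb : l.getLast? = some b) :
    walkWt w l = f b - f a + ((listEdges l).map fun p => f p.1 + w p.1 p.2 - f p.2).sum := by
  induction l generalizing a with
  | nil => simp at ha
  | cons x r ih =>
    obtain rfl : x = a := by simpa using ha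
    cases r with
    | nil => simp_all [walkWt, listEdges]
    | cons y r =>
      rw [List.getLast?_cons_cons] at hb
      rw [walkWt, listEdges, List.map_cons, List.sum_cons, ih rfl hb]
      ring

lemma listEdges_append_cons (X : List V) (a : V) (Y : List V) :
    listEdges (X ++ a :: Y) = listEdges (X ++ [a]) ++ listEdges (a :: Y) := by
  induction X with
  | nil => simp [listEdges]
  | cons x X ih =>
    cases X with
    | nil => simp [listEdges]
    | cons y X => simp_all [listEdges]

lemma walkWt_append_cons (w : V → V → ℝ) (X : List V) (a : V) (Y : List V) :
    walkWt w (X ++ a :: Y) = walkWt w (X ++ [a]) + walkWt w (a :: Y) := by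
  rw [walkWt_eq_sum_map, listEdges_append_cons, List.map_append, List.sum_append,
    ← walkWt_eq_sum_map, ← walkWt_eq_sum_map]

lemma isChain_iff_forall_mem_listEdges {R : V → V → Prop} {l : List V} :
    l.IsChain R ↔ ∀ p ∈ listEdges l, R p.1 p.2 := by
  fun_induction listEdges l <;> simp_all [List.isChain_cons_cons]

lemma walkWt_nonneg {E : V → V → Prop} {w : V → V → ℝ} {l : List V} (hpos : PosWeights E w)
    (hl : l.IsChain E) : 0 ≤ walkWt w l := by
  rw [walkWt_eq_sum_map]
  refine List.sum_nonneg fun x hx => ?_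
  obtain ⟨p, hp, rfl⟩ := List.mem_map.1 hx
  exact (hpos _ _ (isChain_iff_forall_mem_listEdges.1 hl p hp)).le

lemma mem_listEdges_iff_infix {p : V × V} {l : List V} :
    p ∈ listEdges l ↔ [p.1, p.2] <:+: l := by
  fun_induction listEdges l with
  | case1 => simp
  | case2 a => simp [List.infix_cons_iff]
  | case3 a b r ih =>
    rw [List.mem_cons, ih, List.infix_cons_iff (a := a), Prod.ext_iff]
    simp [List.cons_prefix_cons]

lemma prefix_of_head?_listEdges {p : V × V} {l : List V} (h : (listEdges l).head? = some p) :
    [p.1, p.2] <+: l := by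
  fun_cases listEdges l with
  | case1 | case2 => simp [listEdges] at h
  | case3 a b r => simp [← Option.some_inj.1 h]

lemma suffix_of_getLast?_listEdges {p : V × V} {l : List V}
    (h : (listEdges l).getLast? = some p) : [p.1, p.2] <:+ l := by
  fun_induction listEdges l with
  | case1 | case2 => simp at h
  | case3 a b r ih =>
    rcases r with _ | ⟨c, r⟩
    · simp [listEdges, ← Option.some_inj.1 h]
    · rw [List.getLast?_cons_of_ne_nil (by simp [listEdges])] at h
      exact (ih h).trans (List.suffix_cons a _)

section Paths

variable {E : V → V → Prop} {a b u : V} {X Y : List V}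

lemma IsPathFrom.split (h : IsPathFrom E a b (X ++ u :: Y)) :
    IsPathFrom E a u (X ++ [u]) ∧ IsPathFrom E u b (u :: Y) := by
  obtain ⟨⟨hc, ha, hb⟩, hnd⟩ := h
  refine ⟨⟨⟨List.IsChain.infix hc ⟨[], Y, by simp⟩, ?_, by simp⟩, ?_⟩,
    ⟨⟨List.IsChain.right_of_append hc, rfl, by simpa [List.getLast?_append] using hb⟩, ?_⟩⟩
  · cases X <;> simp_all
  · exact (List.sublist_append_left _ _).nodup (by simpa using hnd)
  · exact (List.sublist_append_right _ _).nodup hnd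

lemma IsPathFrom.append (h₁ : IsPathFrom E a u (X ++ [u])) (h₂ : IsPathFrom E u b (u :: Y))
    (hXY : ∀ x ∈ X, x ∉ Y) : IsPathFrom E a b (X ++ u :: Y) := by
  obtain ⟨⟨hc₁, ha, -⟩, hnd₁⟩ := h₁
  obtain ⟨⟨hc₂, -, hb⟩, hnd₂⟩ := h₂
  refine ⟨⟨?_, ?_, by simpa [List.getLast?_append] using hb⟩, ?_⟩
  · show (X ++ u :: Y).IsChain E
    simpa using hc₁.append_overlap (l₃ := Y) (hc₂ : (u :: Y).IsChain E) (by simp)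
  · cases X <;> simp_all
  · simp only [List.nodup_append, List.nodup_cons] at hnd₁ hnd₂ ⊢
    aesop

end Paths

section Distances

variable {E : V → V → Prop} {w d : V → V → ℝ} {s t a b : V} {l : List V}

lemma IsDistFn.self_eq_zero (hpos : PosWeights E w) (hd : IsDistFn E w d) (u : V) :
    d u u = 0 := by
  have hpath : IsPathFrom E u u [u] :=
    ⟨⟨List.isChain_singleton u, rfl, rfl⟩, List.nodup_singleton u⟩
  obtain ⟨l, hl, hlw⟩ := hd.2 u u ⟨_, hpath⟩
  have := hd.1 u u _ hpath
  have := walkWt_nonneg hpos hl.1.1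
  simp only [walkWt] at *
  linarith

lemma IsStraight.dist_le_add (hpos : PosWeights E w) (hd : IsDistFn E w d)
    (hst : IsStraight E w d s t) {p q : V} (hpq : E p q) : d s q ≤ d s p + w p q := by
  obtain ⟨l, hl, hp, -⟩ := hst.2 p
  obtain ⟨X, Y, rfl⟩ := List.append_of_mem hp
  obtain ⟨m, hm, hmw⟩ := hd.2 s p ⟨_, hl.split.1⟩
  obtain ⟨m, rfl⟩ := List.getLast?_eq_some_iff.1 hm.1.2.2
  have hw := hpos p q hpq
  by_cases hq : q ∈ m ++ [p]
  · obtain ⟨M, N, hMN⟩ := List.append_of_mem hq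
    rw [hMN] at hm hmw
    rw [walkWt_append_cons] at hmw
    have := hd.1 s q _ hm.split.1
    have := walkWt_nonneg hpos hm.split.2.1.1
    linarith
  · have hqp : q ≠ p := fun h => hq (by simp [h])
    have hpq' : IsPathFrom E p q [p, q] :=
      ⟨⟨List.isChain_pair.2 hpq, rfl, rfl⟩, by simpa using hqp.symm⟩
    have := hd.1 s q _ (hm.append hpq' fun x hx hxq => hq (by simp_all))
    rw [walkWt_append_cons, hmw] at this
    simpa [walkWt] using this

lemma IsStraight.sub_lt_walkWt (hpos : PosWeights E w) (hd : IsDistFn E w d)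
    (hst : IsStraight E w d s t) (hl : IsWalkFrom E a b l)
    (hback : ∃ p ∈ listEdges l, IsBackEdge E w d s p) : d s b - d s a < walkWt w l := by
  obtain ⟨p, hp, -, hpb⟩ := hback
  rw [walkWt_eq_sub_add_sum_map w (d s) hl.2.1 hl.2.2]
  have hslack : ∀ x ∈ (listEdges l).map fun p => d s p.1 + w p.1 p.2 - d s p.2, 0 ≤ x := by
    simp only [List.mem_map]
    rintro _ ⟨q, hq, rfl⟩
    have := hst.dist_le_add hpos hd (isChain_iff_forall_mem_listEdges.1 hl.1 q hq)
    linarith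
  have := List.single_le_sum hslack _ (List.mem_map_of_mem hp)
  linarith

lemma IsStraight.isForwardPath_of_walkWt_eq (hpos : PosWeights E w) (hd : IsDistFn E w d)
    (hst : IsStraight E w d s t) (hl : IsWalkFrom E a b l) (hlw : walkWt w l = d s b - d s a) :
    IsForwardPath E w d s l := by
  intro p hp
  have hE := isChain_iff_forall_mem_listEdges.1 hl.1 p hp
  refine ⟨hE, le_antisymm ?_ (hst.dist_le_add hpos hd hE)⟩
  by_contra! hlt
  linarith [hst.sub_lt_walkWt hpos hd hl ⟨p, hp, hE, hlt⟩]

lemma IsStraight.isForwardPath_of_not_isBackEdge (hpos : PosWeights E w) (hd : IsDistFn E w d)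
    (hst : IsStraight E w d s t) (hl : l.IsChain E)
    (hnb : ∀ p ∈ listEdges l, ¬ IsBackEdge E w d s p) : IsForwardPath E w d s l := by
  intro p hp
  have hE := isChain_iff_forall_mem_listEdges.1 hl p hp
  exact ⟨hE, le_antisymm (not_lt.1 fun h => hnb p hp ⟨hE, h⟩) (hst.dist_le_add hpos hd hE)⟩

lemma IsForwardPath.walkWt_eq (hf : IsForwardPath E w d s l) (ha : l.head? = some a)
    (hb : l.getLast? = some b) : walkWt w l = d s b - d s a := by
  rw [walkWt_eq_sub_add_sum_map w (d s) ha hb, List.sum_eq_zero, add_zero]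
  simp only [List.mem_map]
  rintro _ ⟨p, hp, rfl⟩
  linarith [(hf p hp).2]

lemma IsForwardPath.pairwise (hpos : PosWeights E w) (hf : IsForwardPath E w d s l) :
    l.Pairwise fun x y => d s x < d s y := by
  refine (@List.isChain_iff_pairwise _ (fun x y => d s x < d s y) _ ⟨lt_trans⟩).1
    (isChain_iff_forall_mem_listEdges.2 fun p hp => ?_)
  linarith [hpos _ _ (hf p hp).1, (hf p hp).2]

lemma IsStraight.exists_forwardPath (hpos : PosWeights E w) (hd : IsDistFn E w d)
    (hst : IsStraight E w d s t) (u : V) :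
    (∃ l, IsPathFrom E s u l ∧ IsForwardPath E w d s l) ∧
      ∃ l, IsPathFrom E u t l ∧ IsForwardPath E w d s l := by
  obtain ⟨l, hl, hu, hlw⟩ := hst.2 u
  obtain ⟨X, Y, rfl⟩ := List.append_of_mem hu
  obtain ⟨h₁, h₂⟩ := hl.split
  rw [walkWt_append_cons] at hlw
  have := hd.1 _ _ _ h₁
  have := hd.1 _ _ _ h₂
  have := hst.1 u
  have := hd.self_eq_zero hpos s
  exact ⟨⟨_, h₁, hst.isForwardPath_of_walkWt_eq hpos hd h₁.1 (by linarith)⟩,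
    _, h₂, hst.isForwardPath_of_walkWt_eq hpos hd h₂.1 (by linarith)⟩

lemma IsLayered.dist_lt_of_isBackEdge (hL : IsLayered E w d s t) {p : V × V}
    (hp : IsBackEdge E w d s p) : d s p.2 < d s p.1 := by
  obtain ⟨hE, hlt⟩ := hp
  refine lt_of_le_of_ne ?_ (hL.2.1 _ _ hE).symm
  by_contra! h
  rcases hL.2.2 _ _ hE h p.2 with h' | h' <;> linarith

end Distances

section Exchange

variable {E : V → V → Prop} {w d : V → V → ℝ} {s t z : V} {l pre suf : List V}

lemma IsNextToShortest.exists_mem_suffix_dist_lt (hpos : PosWeights E w) (hd : IsDistFn E w d)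
    (hst : IsStraight E w d s t) (hP : IsNextToShortest E w d s t l) (hl : l = pre ++ z :: suf)
    (hpre : ∃ p ∈ listEdges (pre ++ [z]), IsBackEdge E w d s p)
    (hsuf : ∃ p ∈ listEdges (z :: suf), IsBackEdge E w d s p) :
    ∃ x ∈ suf, d s x < d s z := by
  obtain ⟨⟨hlpath, -⟩, hmin⟩ := hP
  subst hl
  obtain ⟨h₁, h₂⟩ := hlpath.split
  by_contra! hge
  obtain ⟨⟨Q, hQ, hQf⟩, -⟩ := hst.exists_forwardPath hpos hd z
  obtain ⟨Q, rfl⟩ := List.getLast?_eq_some_iff.1 hQ.1.2.2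
  have hQlt : ∀ x ∈ Q, d s x < d s z := by
    simpa using (List.pairwise_append.1 (hQf.pairwise hpos)).2.2
  have hR := hQ.append h₂ fun x hx hx' => (hQlt x hx).not_ge (hge x hx')
  have hQw := hQf.walkWt_eq hQ.1.2.1 hQ.1.2.2
  have h₁w := hst.sub_lt_walkWt hpos hd h₁.1 hpre
  have h₂w := hst.sub_lt_walkWt hpos hd h₂.1 hsuf
  have hss := hd.self_eq_zero hpos s
  have := hmin _ ⟨hR, by rw [walkWt_append_cons]; linarith⟩
  rw [walkWt_append_cons w pre, walkWt_append_cons w Q] at this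
  linarith

lemma IsNextToShortest.exists_mem_prefix_dist_gt (hpos : PosWeights E w) (hd : IsDistFn E w d)
    (hst : IsStraight E w d s t) (hP : IsNextToShortest E w d s t l) (hl : l = pre ++ z :: suf)
    (hpre : ∃ p ∈ listEdges (pre ++ [z]), IsBackEdge E w d s p)
    (hsuf : ∃ p ∈ listEdges (z :: suf), IsBackEdge E w d s p) :
    ∃ x ∈ pre, d s z < d s x := by
  obtain ⟨⟨hlpath, -⟩, hmin⟩ := hP
  subst hl
  obtain ⟨h₁, h₂⟩ := hlpath.split
  by_contra! hle
  obtain ⟨-, F, hF, hFf⟩ := hst.exists_forwardPath hpos hd z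
  obtain ⟨F, rfl⟩ := List.head?_eq_some_iff.1 hF.1.2.1
  have hFgt : ∀ x ∈ F, d s z < d s x := (List.pairwise_cons.1 (hFf.pairwise hpos)).1
  have hR := h₁.append hF fun x hx hx' => (hFgt x hx').not_ge (hle x hx)
  have hFw := hFf.walkWt_eq hF.1.2.1 hF.1.2.2
  have h₁w := hst.sub_lt_walkWt hpos hd h₁.1 hpre
  have h₂w := hst.sub_lt_walkWt hpos hd h₂.1 hsuf
  have hss := hd.self_eq_zero hpos s
  have := hmin _ ⟨hR, by rw [walkWt_append_cons]; linarith⟩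
  rw [walkWt_append_cons w pre z suf, walkWt_append_cons w pre z F] at this
  linarith

end Exchange

section BackEdgeDecomposition

variable {E : V → V → Prop} {w d : V → V → ℝ} {s t A B : V} {l l1 l0 l2 : List V}

lemma IsBEDecomp.exists_split (hdec : IsBEDecomp E w d s t l l1 l0 l2 A B) {z : V}
    (hz : z ∈ l0.tail) (hzB : z ≠ B) :
    ∃ pre suf, l = pre ++ z :: suf ∧ (∀ x ∈ pre, x ∈ l1 ∨ x ∈ l0.tail) ∧
      (∀ x ∈ suf, x ∈ l0.tail ∨ x ∈ l2.tail) ∧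
      (∃ p ∈ listEdges (pre ++ [z]), IsBackEdge E w d s p) ∧
      ∃ p ∈ listEdges (z :: suf), IsBackEdge E w d s p := by
  obtain ⟨h1, h0, -, rfl, -, -, ⟨pA, hpA, hbA⟩, pB, hpB, hbB⟩ := hdec
  obtain ⟨r, rfl⟩ := List.head?_eq_some_iff.1 h0.1.2.1
  obtain ⟨l1, rfl⟩ := List.getLast?_eq_some_iff.1 h1.1.2.2
  rw [List.tail_cons] at hz ⊢
  obtain ⟨E1, E2, rfl⟩ := List.append_of_mem hz
  have hE2 : E2 ≠ [] := by
    rintro rfl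
    have := h0.1.2.2
    rw [← List.cons_append, List.getLast?_concat] at this
    exact hzB (Option.some_inj.1 this)
  refine ⟨l1 ++ A :: E1, E2 ++ l2.tail, by simp, by simp; tauto, by simp; tauto,
    ⟨pA, ?_, hbA⟩, pB, ?_, hbB⟩
  · have hpre : [pA.1, pA.2] <+: A :: (E1 ++ [z]) :=
      List.prefix_of_prefix_length_le (prefix_of_head?_listEdges hpA) ⟨E2, by simp⟩ (by simp)
    exact mem_listEdges_iff_infix.2 (hpre.isInfix.trans ⟨l1, [], by simp⟩)
  · have hsuf : [pB.1, pB.2] <:+ z :: E2 :=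
      List.suffix_of_suffix_length_le (suffix_of_getLast?_listEdges hpB) ⟨A :: E1, by simp⟩
        (by simpa [Nat.one_le_iff_ne_zero] using hE2)
    exact mem_listEdges_iff_infix.2 (hsuf.isInfix.trans ⟨[], l2.tail, by simp⟩)

lemma IsBEDecomp.dist_le_of_mem_left (hpos : PosWeights E w) (hd : IsDistFn E w d)
    (hst : IsStraight E w d s t) (hdec : IsBEDecomp E w d s t l l1 l0 l2 A B) :
    ∀ x ∈ l1, d s x ≤ d s A := by
  obtain ⟨h1, -, -, -, hnb1, -⟩ := hdec
  obtain ⟨l1, rfl⟩ := List.getLast?_eq_some_iff.1 h1.1.2.2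
  have hmono := (hst.isForwardPath_of_not_isBackEdge hpos hd h1.1.1 hnb1).pairwise hpos
  have hlt : ∀ x ∈ l1, d s x < d s A := by simpa using (List.pairwise_append.1 hmono).2.2
  intro x hx
  rcases List.mem_append.1 hx with hx | hx
  · exact (hlt x hx).le
  · rw [List.mem_singleton.1 hx]

lemma IsBEDecomp.dist_lt_of_mem_right (hpos : PosWeights E w) (hd : IsDistFn E w d)
    (hst : IsStraight E w d s t) (hdec : IsBEDecomp E w d s t l l1 l0 l2 A B) :
    ∀ x ∈ l2.tail, d s B < d s x := by
  obtain ⟨-, -, h2, -, -, hnb2, -⟩ := hdec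
  obtain ⟨l2, rfl⟩ := List.head?_eq_some_iff.1 h2.1.2.1
  have hmono := (hst.isForwardPath_of_not_isBackEdge hpos hd h2.1.1 hnb2).pairwise hpos
  exact (List.pairwise_cons.1 hmono).1

lemma IsBEDecomp.dist_target_lt (hpos : PosWeights E w) (hd : IsDistFn E w d)
    (hst : IsStraight E w d s t) (hP : IsNextToShortest E w d s t l)
    (hdec : IsBEDecomp E w d s t l l1 l0 l2 A B) {u : V} (hu : u ∈ l0.tail) (huB : u ≠ B) :
    d s B < d s u := by
  classical
  by_contra! hle
  obtain ⟨z, hz, hmin⟩ :=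
    {x ∈ l0.tail.toFinset | x ≠ B}.exists_min_image (d s) ⟨u, by simp [hu, huB]⟩
  simp only [Finset.mem_filter, List.mem_toFinset] at hz hmin
  have hzu := hmin u ⟨hu, huB⟩
  obtain ⟨pre, suf, hl, -, hsuf, hbpre, hbsuf⟩ := hdec.exists_split hz.1 hz.2
  obtain ⟨x, hx, hxz⟩ := hP.exists_mem_suffix_dist_lt hpos hd hst hl hbpre hbsuf
  rcases hsuf x hx with hx | hx
  · by_cases hxB : x = B
    · subst hxB
      linarith
    · linarith [hmin x ⟨hx, hxB⟩]
  · linarith [hdec.dist_lt_of_mem_right hpos hd hst x hx]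

lemma IsBEDecomp.dist_lt_source (hpos : PosWeights E w) (hd : IsDistFn E w d)
    (hst : IsStraight E w d s t) (hP : IsNextToShortest E w d s t l)
    (hdec : IsBEDecomp E w d s t l l1 l0 l2 A B) {u : V} (hu : u ∈ l0.tail) (huB : u ≠ B) :
    d s u < d s A := by
  classical
  by_contra! hle
  obtain ⟨z, hz, hmax⟩ :=
    {x ∈ l0.tail.toFinset | x ≠ B}.exists_max_image (d s) ⟨u, by simp [hu, huB]⟩
  simp only [Finset.mem_filter, List.mem_toFinset] at hz hmax
  have hzu := hmax u ⟨hu, huB⟩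
  obtain ⟨pre, suf, hl, hpre, -, hbpre, hbsuf⟩ := hdec.exists_split hz.1 hz.2
  obtain ⟨x, hx, hzx⟩ := hP.exists_mem_prefix_dist_gt hpos hd hst hl hbpre hbsuf
  rcases hpre x hx with hx | hx
  · linarith [hdec.dist_le_of_mem_left hpos hd hst x hx]
  · by_cases hxB : x = B
    · subst hxB
      linarith [hdec.dist_target_lt hpos hd hst hP hz.1 hz.2]
    · linarith [hmax x ⟨hx, hxB⟩]

lemma IsBEDecomp.dist_target_lt_source (hpos : PosWeights E w) (hd : IsDistFn E w d)
    (hL : IsLayered E w d s t) (hP : IsNextToShortest E w d s t l)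
    (hdec : IsBEDecomp E w d s t l l1 l0 l2 A B) : d s B < d s A := by
  obtain ⟨-, h0, -, -, -, -, ⟨p, hp, hpb⟩, -⟩ := id hdec
  obtain ⟨r, rfl⟩ := List.head?_eq_some_iff.1 h0.1.2.1
  obtain ⟨rfl, hpr⟩ := List.cons_prefix_cons.1 (prefix_of_head?_listEdges hp)
  have hpA := hL.dist_lt_of_isBackEdge hpb
  have hpmem : p.2 ∈ r := hpr.subset (by simp)
  by_cases hpB : p.2 = B
  · rwa [hpB] at hpA
  · exact (hdec.dist_target_lt hpos hd hL.1 hP hpmem hpB).trans hpA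

end BackEdgeDecomposition

/-- layer-range lemma. For a next-to-shortest path with back-edge
decomposition `(A, B; P₁*, P₀*, P₂*)` we have `d(s,B) < d(s,A)`, and every internal vertex
`u` of `P₀*` satisfies `d(s,B) < d(s,u) < d(s,A)`. -/
theorem stmt5 (E : V → V → Prop) (w d : V → V → ℝ) (s t A B : V)
    (l l1 l0 l2 : List V)
    (hpos : PosWeights E w) (hd : IsDistFn E w d)
    (hL : IsLayered E w d s t)
    (hP : IsNextToShortest E w d s t l)
    (hdec : IsBEDecomp E w d s t l l1 l0 l2 A B) :
    d s B < d s A ∧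
    ∀ u ∈ l0, u ≠ A → u ≠ B → d s B < d s u ∧ d s u < d s A := by
  refine ⟨hdec.dist_target_lt_source hpos hd hL hP, fun u hu huA huB => ?_⟩
  obtain ⟨r, hr⟩ := List.head?_eq_some_iff.1 hdec.2.1.1.2.1
  have hu' : u ∈ l0.tail := by simp_all
  exact ⟨hdec.dist_target_lt hpos hd hL.1 hP hu' huB,
    hdec.dist_lt_source hpos hd hL.1 hP hu' huB⟩
end
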